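/- Let p ≥ 5 be an odd prime. Then, modulo 2, the generating function F_p̄(q) = (q²;q²)_∞(q^p;q^p)_∞^{(p+1)/2}/((q;q)_∞(q^{2p};q^{2p})_∞) is coefficientwise congruent to (q;q)_∞ · (q^p;q^p)_∞^{(p−3)/2}. -/

import Mathlib

open scoped Classical

noncomputable def euler (c : ℕ) : PowerSeries ℤ :=
  PowerSeries.mk fun d =>
    PowerSeries.coeff (R := ℤ) d
      (∏ n ∈ Finset.range (d + 1), (1 - (PowerSeries.X : PowerSeries ℤ) ^ (c * (n + 1))))

noncomputable def eulerInv (c : ℕ) : PowerSeries ℤ := (euler c).invOfUnit 1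

/-!
Over `ZMod 2` the Frobenius gives `(1 - X^k)^2 = 1 - X^(2k)`, hence `(q²;q²)_∞ ≡ (q;q)_∞²` and
`(q^{2p};q^{2p})_∞ ≡ (q^p;q^p)_∞²`. Substituting these, the denominator `(q;q)_∞ (q^{2p};q^{2p})_∞`
cancels against `(q;q)_∞ (q^p;q^p)_∞²` in the numerator. The infinite products are handled through
their partial products, which agree with them modulo `X^m`.
-/

open PowerSeries Finset

section EulerProduct

variable (R : Type*) [CommRing R]

noncomputable def eulerProd (c m : ℕ) : R⟦X⟧ :=
  ∏ n ∈ range m, (1 - X ^ (c * (n + 1)))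

variable {R}

theorem eulerProd_succ (c m : ℕ) :
    eulerProd R c (m + 1) = eulerProd R c m * (1 - X ^ (c * (m + 1))) :=
  prod_range_succ _ _

theorem map_eulerProd {S : Type*} [CommRing S] (f : R →+* S) (c m : ℕ) :
    map f (eulerProd R c m) = eulerProd S c m := by
  simp [eulerProd]

theorem X_pow_dvd_eulerProd_sub {c k m : ℕ} (hc : 0 < c) (hkm : k ≤ m) :
    (X : R⟦X⟧) ^ k ∣ eulerProd R c m - eulerProd R c k := by
  induction m, hkm using Nat.le_induction with
  | base => simp
  | succ m hkm ih =>
    have hsplit : eulerProd R c (m + 1) - eulerProd R c k =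
        (eulerProd R c m - eulerProd R c k) - eulerProd R c m * X ^ (c * (m + 1)) := by
      rw [eulerProd_succ]; ring
    rw [hsplit]
    exact dvd_sub ih (dvd_mul_of_dvd_right (pow_dvd_pow X (by nlinarith)) _)

theorem eulerProd_pow_char (p : ℕ) [Fact p.Prime] [CharP R p] (c m : ℕ) :
    eulerProd R c m ^ p = eulerProd R (p * c) m := by
  have := charP_of_injective_ringHom (C_injective (R := R)) p
  rw [eulerProd, ← prod_pow]
  refine prod_congr rfl fun n _ => ?_
  rw [sub_pow_char, one_pow, ← pow_mul]
  ring_nf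

end EulerProduct

theorem coeff_euler (c d : ℕ) : coeff d (euler c) = coeff d (eulerProd ℤ c (d + 1)) :=
  coeff_mk _ _

theorem X_pow_dvd_euler_sub_eulerProd {c : ℕ} (hc : 0 < c) (m : ℕ) :
    (X : ℤ⟦X⟧) ^ m ∣ euler c - eulerProd ℤ c m := by
  refine X_pow_dvd_iff.mpr fun d hd => ?_
  rw [map_sub, coeff_euler, ← neg_sub, neg_eq_zero, ← map_sub]
  exact X_pow_dvd_iff.mp (X_pow_dvd_eulerProd_sub hc hd) d (lt_add_one d)

theorem constantCoeff_euler {c : ℕ} (hc : 0 < c) : constantCoeff (euler c) = 1 := by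
  rw [← coeff_zero_eq_constantCoeff_apply, coeff_euler]
  simp [eulerProd, hc.ne']

theorem euler_mul_eulerInv {c : ℕ} (hc : 0 < c) : euler c * eulerInv c = 1 :=
  mul_invOfUnit _ 1 (by rw [constantCoeff_euler hc, Units.val_one])

theorem map_euler_pow_char {R : Type*} [CommRing R] (p : ℕ) [Fact p.Prime] [CharP R p] {c : ℕ}
    (hc : 0 < c) :
    map (Int.castRingHom R) (euler c) ^ p = map (Int.castRingHom R) (euler (p * c)) := by
  set φ := map (Int.castRingHom R)
  have hφ : ∀ {c'}, 0 < c' → ∀ m, (X : R⟦X⟧) ^ m ∣ φ (euler c') - eulerProd R c' m :=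
    fun hc' m => by
      simpa [φ, map_eulerProd] using map_dvd φ (X_pow_dvd_euler_sub_eulerProd hc' m)
  ext d
  rw [← sub_eq_zero, ← map_sub]
  have hpow := (hφ hc (d + 1)).trans (sub_dvd_pow_sub_pow _ _ p)
  rw [eulerProd_pow_char] at hpow
  have hdvd := dvd_sub hpow (hφ (Nat.mul_pos (Fact.out : p.Prime).pos hc) (d + 1))
  rw [sub_sub_sub_cancel_right] at hdvd
  exact X_pow_dvd_iff.mp hdvd d (lt_add_one d)

theorem coeff_modEq_of_map_eq {n : ℕ} {f g : ℤ⟦X⟧}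
    (h : map (Int.castRingHom (ZMod n)) f = map (Int.castRingHom (ZMod n)) g) (k : ℕ) :
    coeff k f ≡ coeff k g [ZMOD n] :=
  (ZMod.intCast_eq_intCast_iff _ _ n).mp (by simpa using congrArg (coeff k) h)

theorem barcore_genfn_mod2_general (p : ℕ) (hp5 : 5 ≤ p) (n : ℕ) :
    PowerSeries.coeff (R := ℤ) n
        (euler 2 * (euler p) ^ ((p + 1) / 2) * eulerInv 1 * eulerInv (2 * p)) ≡
      PowerSeries.coeff (R := ℤ) n (euler 1 * (euler p) ^ ((p - 3) / 2)) [ZMOD 2] := by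
  refine coeff_modEq_of_map_eq ?_ n
  set φ := map (Int.castRingHom (ZMod 2))
  have hp_pos : 0 < p := by omega
  have hsq1 : φ (euler 2) = φ (euler 1) ^ 2 := (map_euler_pow_char 2 one_pos).symm
  have hinv1 : φ (euler 1) * φ (eulerInv 1) = 1 := by
    rw [← map_mul, euler_mul_eulerInv one_pos, map_one]
  have hinv2p : φ (euler p) ^ 2 * φ (eulerInv (2 * p)) = 1 := by
    rw [map_euler_pow_char 2 hp_pos, ← map_mul, euler_mul_eulerInv (by omega), map_one]
  have hexp : (p + 1) / 2 = (p - 3) / 2 + 2 := by omega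
  simp only [map_mul, map_pow, hexp, hsq1]
  linear_combination (φ (euler 1) * φ (euler p) ^ ((p - 3) / 2) * φ (euler p) ^ 2 *
      φ (eulerInv (2 * p))) * hinv1 + φ (euler 1) * φ (euler p) ^ ((p - 3) / 2) * hinv2p

/-- Modulo 2, F_p̄(q) = (q²;q²)_∞ (q^p;q^p)_∞^((p+1)/2) / ((q;q)_∞ (q^{2p};q^{2p})_∞)
is coefficientwise congruent to (q;q)_∞ (q^p;q^p)_∞^((p−3)/2). -/
theorem barcore_genfn_mod2 (p : ℕ) (hp : p.Prime) (hodd : Odd p) (hp5 : 5 ≤ p) (n : ℕ) :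
    PowerSeries.coeff (R := ℤ) n
        (euler 2 * (euler p) ^ ((p + 1) / 2) * eulerInv 1 * eulerInv (2 * p)) ≡
      PowerSeries.coeff (R := ℤ) n (euler 1 * (euler p) ^ ((p - 3) / 2)) [ZMOD 2] :=
  barcore_genfn_mod2_general p hp5 n
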